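/- For every i = 0, …, n one has the identity (α_{2i}/φ_{2i}) · S'_{2i} − (φ_{2i+1}/α_{2i+1}) · S'_{2i+2} = (1 − β'₀/q) · (1 + α_{2i}/φ_{2i}). -/

import Mathlib

/-!
Write `T_j(x) = P_j(x) (1 + φ_{x+2j}/α_{x+2j})` for the summands of `S'_x`, where `P_j(x)` is
the product of the first `j` pairs of ratios `φ/α` starting at `x`. Since
`P_{j+1}(x) = (φ_x/α_x)(φ_{x+1}/α_{x+1}) P_j(x+2)`, the product `(φ_{x+1}/α_{x+1}) S'_{x+2}` is
`(α_x/φ_x) ∑_j T_{j+1}(x)`, so the difference telescopes to `(α_x/φ_x)(T_0(x) - T_{n+1}(x))`.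
As `2(n+1) = 0` in `ZMod (2n+2)`, `T_{n+1}(x) = P_{n+1}(x) T_0(x)`, and `P_{n+1}(x)` runs once
around the cycle, so it equals `∏ φ / ∏ α = β'₀/q`.
-/

open Finset

/-- `S'_x` (the same formula covers both even and odd indices `x` of `ZMod (2n+2)`):
for `x = 2i` this is `S'_{2i}` and for `x = 2i+1` this is `S'_{2i+1}`. -/
noncomputable def Sp (n : ℕ) {K : Type*} [Field K] (α φ : ZMod (2*n+2) → K)
    (x : ZMod (2*n+2)) : K :=
  ∑ j ∈ range (n+1),
    (∏ k ∈ range j, (φ (x + 2*k) / α (x + 2*k)) * (φ (x + 2*k + 1) / α (x + 2*k + 1)))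
      * (1 + φ (x + 2*j) / α (x + 2*j))

theorem Finset.prod_range_two_mul {M : Type*} [CommMonoid M] (f : ℕ → M) (m : ℕ) :
    ∏ j ∈ range (2 * m), f j = ∏ k ∈ range m, f (2 * k) * f (2 * k + 1) := by
  induction m with
  | zero => simp
  | succ m ih => rw [Nat.mul_succ, prod_range_succ, prod_range_succ, ih, prod_range_succ, mul_assoc]

theorem ZMod.prod_range_natCast {M : Type*} [CommMonoid M] (N : ℕ) [NeZero N]
    (f : ZMod N → M) :
    ∏ j ∈ range N, f j = ∏ y : ZMod N, f y :=
  prod_nbij' (↑) ZMod.val (by simp) (by simp [ZMod.val_lt])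
    (fun _ hj => ZMod.val_cast_of_lt (mem_range.1 hj)) (fun y _ => ZMod.natCast_zmod_val y)
    (fun _ _ => rfl)

theorem ZMod.prod_pairs_eq_prod_univ {M : Type*} [CommMonoid M] (n : ℕ)
    (f : ZMod (2 * n + 2) → M) (x : ZMod (2 * n + 2)) :
    ∏ k ∈ range (n + 1), f (x + 2 * k) * f (x + 2 * k + 1) = ∏ y, f y := calc
  _ = ∏ j ∈ range (2 * (n + 1)), f (x + j) := by
    rw [prod_range_two_mul]
    push_cast
    simp only [add_assoc]
  _ = ∏ y, f (x + y) := ZMod.prod_range_natCast _ (fun y => f (x + y))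
  _ = ∏ y, f y := Equiv.prod_comp (Equiv.addLeft x) f

section PairRatioProd

variable {n : ℕ} {K : Type*} [Field K] (α φ : ZMod (2 * n + 2) → K)

noncomputable def pairRatioProd (x : ZMod (2 * n + 2)) (j : ℕ) : K :=
  ∏ k ∈ range j, (φ (x + 2 * k) / α (x + 2 * k)) * (φ (x + 2 * k + 1) / α (x + 2 * k + 1))

theorem Sp_eq_sum_pairRatioProd (x : ZMod (2 * n + 2)) :
    Sp n α φ x =
      ∑ j ∈ range (n + 1), pairRatioProd α φ x j * (1 + φ (x + 2 * j) / α (x + 2 * j)) :=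
  rfl

theorem pairRatioProd_succ (x : ZMod (2 * n + 2)) (j : ℕ) :
    pairRatioProd α φ x (j + 1) =
      φ x / α x * (φ (x + 1) / α (x + 1)) * pairRatioProd α φ (x + 2) j := by
  rw [pairRatioProd, prod_range_succ', pairRatioProd, mul_comm]
  push_cast
  simp only [mul_add, mul_zero, add_zero, mul_one, add_right_comm _ (2 : ZMod (2 * n + 2)),
    add_assoc]

theorem pairRatioProd_full (x : ZMod (2 * n + 2)) :
    pairRatioProd α φ x (n + 1) = (∏ y, φ y) / ∏ y, α y := by
  rw [pairRatioProd, ← ZMod.prod_pairs_eq_prod_univ n φ x, ← ZMod.prod_pairs_eq_prod_univ n α x,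
    ← prod_div_distrib]
  exact prod_congr rfl fun _ _ => div_mul_div_comm _ _ _ _

theorem div_mul_Sp_sub_div_mul_Sp_add_two {x : ZMod (2 * n + 2)} (hαx : α x ≠ 0)
    (hφx : φ x ≠ 0) :
    α x / φ x * Sp n α φ x - φ (x + 1) / α (x + 1) * Sp n α φ (x + 2)
      = (1 - pairRatioProd α φ x (n + 1)) * (1 + α x / φ x) := by
  set T : ℕ → K := fun j => pairRatioProd α φ x j * (1 + φ (x + 2 * j) / α (x + 2 * j))
  have hshift : φ (x + 1) / α (x + 1) * Sp n α φ (x + 2) =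
      α x / φ x * ∑ j ∈ range (n + 1), T (j + 1) := by
    rw [Sp_eq_sum_pairRatioProd, mul_sum, mul_sum]
    refine sum_congr rfl fun j _ => ?_
    simp only [T, pairRatioProd_succ]
    push_cast
    rw [show x + 2 * (j + 1) = x + 2 + 2 * j by ring]
    field_simp
  have hT0 : T 0 = 1 + φ x / α x := by simp [T, pairRatioProd]
  have hTn : T (n + 1) = pairRatioProd α φ x (n + 1) * (1 + φ x / α x) := by
    have hperiod : x + 2 * ((n + 1 : ℕ) : ZMod (2 * n + 2)) = x := by
      have hzero := ZMod.natCast_self (2 * n + 2)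
      push_cast at hzero ⊢
      linear_combination hzero
    simp only [T, hperiod]
  have hSp : Sp n α φ x = ∑ j ∈ range (n + 1), T j := rfl
  rw [hSp, hshift, ← mul_sub, ← sum_sub_distrib, sum_range_sub', hT0, hTn]
  field_simp
  ring

end PairRatioProd

theorem stmt4_general (n : ℕ) (K : Type*) [Field K]
    (α φ : ZMod (2*n+2) → K) (hα : ∀ i, α i ≠ 0) (hφ : ∀ i, φ i ≠ 0)
    (q β'₀ : K)
    (hq : q = ∏ i ∈ range (2*n+2), α (i : ZMod (2*n+2)))
    (hβ'₀ : β'₀ = ∏ i ∈ range (n+1), φ (2*i) * φ (2*i+1)) :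
    ∀ i : ℕ, i ≤ n →
      (α (2*i) / φ (2*i)) * Sp n α φ (2*i) - (φ (2*i+1) / α (2*i+1)) * Sp n α φ (2*i+2)
        = (1 - β'₀ / q) * (1 + α (2*i) / φ (2*i)) := by
  intro i _
  have hβ'₀ : β'₀ = ∏ y, φ y := by
    rw [hβ'₀, ← ZMod.prod_pairs_eq_prod_univ n φ 0]
    simp only [zero_add]
  rw [hq, ZMod.prod_range_natCast, hβ'₀, ← pairRatioProd_full α φ (2 * i)]
  exact div_mul_Sp_sub_div_mul_Sp_add_two α φ (hα _) (hφ _)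

/-- `(α_{2i}/φ_{2i}) S'_{2i} - (φ_{2i+1}/α_{2i+1}) S'_{2i+2}
  = (1 - β'₀/q)(1 + α_{2i}/φ_{2i})` for `i = 0, …, n`. -/
theorem stmt4 (n : ℕ) (hn : 1 ≤ n) (K : Type*) [Field K]
    (α φ : ZMod (2*n+2) → K) (hα : ∀ i, α i ≠ 0) (hφ : ∀ i, φ i ≠ 0)
    (q β'₀ : K)
    (hq : q = ∏ i ∈ range (2*n+2), α (i : ZMod (2*n+2)))
    (hβ'₀ : β'₀ = ∏ i ∈ range (n+1), φ (2*i) * φ (2*i+1)) :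
    ∀ i : ℕ, i ≤ n →
      (α (2*i) / φ (2*i)) * Sp n α φ (2*i) - (φ (2*i+1) / α (2*i+1)) * Sp n α φ (2*i+2)
        = (1 - β'₀ / q) * (1 + α (2*i) / φ (2*i)) :=
  stmt4_general n K α φ hα hφ q β'₀ hq hβ'₀
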